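/- The Jacobians of the graphs G₁ and G₂ are both cyclic of order 24: Jac(G₁) ≅ ℤ/24ℤ and Jac(G₂) ≅ ℤ/24ℤ. In particular, Jac(G₁) and Jac(G₂) are isomorphic as abelian groups. -/

import Mathlib

open scoped Classical

namespace BNGraph

variable {V : Type} [Fintype V]

/-- The degree of a divisor `D : V → ℤ`: the sum of its values. -/
def degSum (D : V → ℤ) : ℤ := ∑ v, D v

/-- A divisor is effective if all its values are nonnegative. -/
def Effective (D : V → ℤ) : Prop := ∀ v, 0 ≤ D v

/-- The combinatorial Laplacian of a graph, as a homomorphism on divisors. -/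
noncomputable def lap (G : SimpleGraph V) : (V → ℤ) →+ (V → ℤ) where
  toFun f := fun v => (G.degree v : ℤ) * f v - ∑ w ∈ G.neighborFinset v, f w
  map_zero' := by
    funext v; simp
  map_add' f g := by
    funext v
    simp only [Pi.add_apply, Finset.sum_add_distrib]
    ring

/-- The subgroup of principal divisors: the image of the Laplacian. -/
noncomputable def Principal (G : SimpleGraph V) : AddSubgroup (V → ℤ) := (lap G).range

/-- Linear equivalence of divisors. -/
def LinEquiv (G : SimpleGraph V) (D D' : V → ℤ) : Prop := D - D' ∈ Principal G

/-- A divisor is winnable if it is linearly equivalent to an effective divisor. -/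
def Winnable (G : SimpleGraph V) (D : V → ℤ) : Prop :=
  ∃ E : V → ℤ, Effective E ∧ LinEquiv G D E

/-- The Baker–Norine rank of a divisor: the largest `r ≥ 0` such that `D - E` is
winnable for every effective divisor `E` of degree `r`, or `-1` if there is no such `r`
(equivalently, if `D` itself is not winnable). -/
noncomputable def bnRank (G : SimpleGraph V) (D : V → ℤ) : ℤ :=
  sSup {r : ℤ | r = -1 ∨ (0 ≤ r ∧
    ∀ E : V → ℤ, Effective E → degSum E = r → Winnable G (D - E))}

/-- The Picard group of a graph: divisors modulo principal divisors. -/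
abbrev Pic (G : SimpleGraph V) : Type _ := (V → ℤ) ⧸ Principal G

/-- The number of divisor classes of degree `d` and Baker–Norine rank `r`. -/
noncomputable def numClasses (G : SimpleGraph V) (d r : ℤ) : ℕ :=
  Set.ncard {c : Pic G | ∃ D : V → ℤ,
    QuotientAddGroup.mk' (Principal G) D = c ∧ degSum D = d ∧ bnRank G D = r}

/-- Two graphs have the same two-variable zeta function iff for every degree `d` and
rank `r` they have the same number of divisor classes of degree `d` and rank `r`. -/
def SameZeta {W : Type} [Fintype W] (G : SimpleGraph V) (G' : SimpleGraph W) : Prop :=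
  ∀ d r : ℤ, numClasses G d r = numClasses G' d r

/-- Degree as a homomorphism on divisors. -/
def degHom : (V → ℤ) →+ ℤ where
  toFun := degSum
  map_zero' := by simp [degSum]
  map_add' f g := by simp [degSum, Finset.sum_add_distrib]

/-- The subgroup of divisors of degree zero. -/
def Deg0 (V : Type) [Fintype V] : AddSubgroup (V → ℤ) := (degHom (V := V)).ker

/-- The Jacobian of a graph: divisor classes of degree zero. -/
noncomputable abbrev Jac (G : SimpleGraph V) : Type _ :=
  Deg0 V ⧸ ((Principal G).addSubgroupOf (Deg0 V))

/-- The number of connected components of the spanning subgraph with edge set `A`. -/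
noncomputable def numComponents (V : Type) [Fintype V] (A : Set (Sym2 V)) : ℕ :=
  Nat.card (SimpleGraph.fromEdgeSet A).ConnectedComponent

/-- The number of edges of a graph. -/
noncomputable def edgeCount (G : SimpleGraph V) : ℕ := Nat.card G.edgeSet

open MvPolynomial in
/-- The Tutte polynomial of `G`, as a polynomial in `ℤ[x, y]` with `x = X 0`, `y = X 1`:
`T_G(x,y) = Σ_{A ⊆ E(G)} (x−1)^(c(A)−c(E(G))) (y−1)^(c(A)+|A|−|V(G)|)`. -/
noncomputable def tutte (G : SimpleGraph V) : MvPolynomial (Fin 2) ℤ :=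
  ∑ A ∈ G.edgeFinset.powerset,
    (X 0 - 1) ^ (numComponents V ↑A - numComponents V G.edgeSet) *
    (X 1 - 1) ^ (numComponents V ↑A + A.card - Fintype.card V)


/-- `G₁`: the diamond graph (`K₄` minus an edge) on vertices `0,1,2,3`
(with `u = 0`, `v = 1` of degree 3 and `x = 2`, `y = 3` of degree 2),
with a triangle `0,4,5` attached at the vertex `u = 0`. -/
def G1 : SimpleGraph (Fin 6) :=
  SimpleGraph.fromEdgeSet
    {s(0,1), s(0,2), s(0,3), s(1,2), s(1,3), s(0,4), s(0,5), s(4,5)}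

/-- `G₂`: the diamond graph (`K₄` minus an edge) on vertices `0,1,2,3`
(with `u = 0`, `v = 1` of degree 3 and `x = 2`, `y = 3` of degree 2),
with a triangle `2,4,5` attached at the vertex `x = 2`. -/
def G2 : SimpleGraph (Fin 6) :=
  SimpleGraph.fromEdgeSet
    {s(0,1), s(0,2), s(0,3), s(1,2), s(1,3), s(2,4), s(2,5), s(4,5)}

/-!
A weight vector `c : V → ℤ` defines a character `D ↦ ⟨c, D⟩ mod 24` on divisors. Since the
Laplacian is symmetric, it kills every principal divisor `Δ f` as soon as `Δ c ≡ 0 mod 24`.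
For both graphs such a `c` exists which takes the value `1` on a degree-zero divisor and whose
kernel on degree-zero divisors is exactly the principal divisors: solving `Δ f = D` explicitly
only divides by `24`, the number of spanning trees, and `⟨c, D⟩ ≡ 0` is what makes the
solution integral. So the character induces `Jac G ≅ ℤ/24`. The weights reflect the wedge
decomposition `Jac G ≅ Jac(diamond) × Jac(triangle) ≅ ℤ/8 × ℤ/3`: on the diamond they are `3`
times weights of order `8`, and along the triangle they move by multiples of `8`.
-/

open Matrix

theorem lap_eq_lapMatrix_mulVec (G : SimpleGraph V) (f : V → ℤ) :
    lap G f = G.lapMatrix ℤ *ᵥ f := by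
  funext v
  rw [G.lapMatrix_mulVec_apply]
  rfl

theorem lap_apply (G : SimpleGraph V) (f : V → ℤ) (v : V) :
    lap G f v = ∑ w, if G.Adj v w then f v - f w else 0 := by
  rw [← Finset.sum_filter, ← SimpleGraph.neighborFinset_eq_filter, Finset.sum_sub_distrib,
    Finset.sum_const, SimpleGraph.card_neighborFinset_eq_degree, nsmul_eq_mul]
  rfl

theorem dotProduct_lap_comm (G : SimpleGraph V) (c f : V → ℤ) :
    c ⬝ᵥ lap G f = lap G c ⬝ᵥ f := by
  rw [lap_eq_lapMatrix_mulVec, lap_eq_lapMatrix_mulVec, dotProduct_mulVec, ← mulVec_transpose,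
    G.isSymm_lapMatrix ℤ]

theorem mem_deg0_iff {D : V → ℤ} : D ∈ Deg0 V ↔ degSum D = 0 := Iff.rfl

def pairingZMod (n : ℕ) (c : V → ℤ) : (V → ℤ) →+ ZMod n where
  toFun D := ((c ⬝ᵥ D : ℤ) : ZMod n)
  map_zero' := by simp
  map_add' D D' := by simp [dotProduct_add]

theorem pairingZMod_eq_zero_iff {n : ℕ} {c D : V → ℤ} :
    pairingZMod n c D = 0 ↔ (n : ℤ) ∣ c ⬝ᵥ D :=
  ZMod.intCast_zmod_eq_zero_iff_dvd _ n

theorem pairingZMod_lap {G : SimpleGraph V} {n : ℕ} {c : V → ℤ}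
    (hc : ∀ v, (n : ℤ) ∣ lap G c v) (f : V → ℤ) : pairingZMod n c (lap G f) = 0 := by
  rw [pairingZMod_eq_zero_iff, dotProduct_lap_comm]
  exact Finset.dvd_sum fun v _ => (hc v).mul_right (f v)

theorem nonempty_jac_addEquiv_zmod {G : SimpleGraph V} {n : ℕ} (χ : (V → ℤ) →+ ZMod n)
    (hlap : ∀ f, χ (lap G f) = 0) (hker : ∀ D ∈ Deg0 V, χ D = 0 → D ∈ Principal G)
    {D₁ : V → ℤ} (hD₁ : D₁ ∈ Deg0 V) (hχD₁ : χ D₁ = 1) : Nonempty (Jac G ≃+ ZMod n) := by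
  let ψ := χ.comp (Deg0 V).subtype
  have hψ_ker : ψ.ker = (Principal G).addSubgroupOf (Deg0 V) := by
    ext ⟨D, hD⟩
    rw [AddMonoidHom.mem_ker, AddSubgroup.mem_addSubgroupOf]
    refine ⟨hker D hD, ?_⟩
    rintro ⟨f, rfl⟩
    exact hlap f
  have hψ_surj : Function.Surjective ψ := by
    intro y
    obtain ⟨z, rfl⟩ := ZMod.intCast_surjective y
    refine ⟨z • ⟨D₁, hD₁⟩, ?_⟩
    change χ (z • D₁) = z
    rw [map_zsmul, hχD₁, zsmul_one]
  exact ⟨(QuotientAddGroup.quotientAddEquivOfEq hψ_ker.symm).trans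
    (QuotientAddGroup.quotientKerEquivOfSurjective ψ hψ_surj)⟩

theorem lap_G1 (f : Fin 6 → ℤ) : lap G1 f = ![
    5 * f 0 - (f 1 + f 2 + f 3 + f 4 + f 5),
    3 * f 1 - (f 0 + f 2 + f 3),
    2 * f 2 - (f 0 + f 1),
    2 * f 3 - (f 0 + f 1),
    2 * f 4 - (f 0 + f 5),
    2 * f 5 - (f 0 + f 4)] := by
  funext v
  rw [lap_apply, Fin.sum_univ_six]
  fin_cases v <;> simp [G1] <;> ring

def jacG1Weights : Fin 6 → ℤ := ![0, -6, 9, -3, 8, -8]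

theorem dvd_lap_G1_jacG1Weights (v : Fin 6) : (24 : ℤ) ∣ lap G1 jacG1Weights v := by
  rw [lap_G1]
  fin_cases v <;> decide

theorem mem_principal_G1 (D : Fin 6 → ℤ) (hD : D ∈ Deg0 (Fin 6))
    (hχ : pairingZMod 24 jacG1Weights D = 0) : D ∈ Principal G1 := by
  obtain ⟨k, hk⟩ := pairingZMod_eq_zero_iff.1 hχ
  rw [mem_deg0_iff, degSum, Fin.sum_univ_six] at hD
  simp only [dotProduct, jacG1Weights, Fin.sum_univ_six, cons_val_zero, cons_val_one, cons_val,
    Nat.cast_ofNat] at hk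
  refine ⟨![-2 * D 1 + 2 * D 2 - D 3 + 2 * D 4 - 2 * D 5 - 6 * k, 0,
    -D 0 + D 1 - 4 * D 2 - 4 * D 4 + 2 * D 5 + 9 * k, -D 1 + D 2 + D 4 - D 5 - 3 * k,
    -D 2 + D 5 + 2 * k, -D 0 + D 1 - 5 * D 2 - 4 * D 4 + 3 * D 5 + 10 * k], ?_⟩
  rw [lap_G1]
  funext v
  fin_cases v <;>
    simp only [Fin.zero_eta, Fin.mk_one, Fin.reduceFinMk, cons_val_zero, cons_val_one, cons_val] <;>
    omega

theorem nonempty_jac_G1_addEquiv_zmod : Nonempty (Jac G1 ≃+ ZMod 24) :=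
  nonempty_jac_addEquiv_zmod (pairingZMod 24 jacG1Weights)
    (pairingZMod_lap dvd_lap_G1_jacG1Weights) mem_principal_G1
    (D₁ := ![0, 0, 1, 0, -1, 0])
    (by rw [mem_deg0_iff]; decide) (by decide)

theorem lap_G2 (f : Fin 6 → ℤ) : lap G2 f = ![
    3 * f 0 - (f 1 + f 2 + f 3),
    3 * f 1 - (f 0 + f 2 + f 3),
    4 * f 2 - (f 0 + f 1 + f 4 + f 5),
    2 * f 3 - (f 0 + f 1),
    2 * f 4 - (f 2 + f 5),
    2 * f 5 - (f 2 + f 4)] := by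
  funext v
  rw [lap_apply, Fin.sum_univ_six]
  fin_cases v <;> simp [G2] <;> ring

def jacG2Weights : Fin 6 → ℤ := ![0, -6, 9, -3, -7, 1]

theorem dvd_lap_G2_jacG2Weights (v : Fin 6) : (24 : ℤ) ∣ lap G2 jacG2Weights v := by
  rw [lap_G2]
  fin_cases v <;> decide

theorem mem_principal_G2 (D : Fin 6 → ℤ) (hD : D ∈ Deg0 (Fin 6))
    (hχ : pairingZMod 24 jacG2Weights D = 0) : D ∈ Principal G2 := by
  obtain ⟨k, hk⟩ := pairingZMod_eq_zero_iff.1 hχ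
  rw [mem_deg0_iff, degSum, Fin.sum_univ_six] at hD
  simp only [dotProduct, jacG2Weights, Fin.sum_univ_six, cons_val_zero, cons_val_one, cons_val,
    Nat.cast_ofNat] at hk
  refine ⟨![-2 * D 1 + 2 * D 2 - D 3 - 2 * D 4 - 6 * k, 0,
    -D 0 + D 1 - 4 * D 2 + 2 * D 4 - D 5 + 9 * k, -D 1 + D 2 - D 4 - 3 * k,
    -2 * D 1 + 3 * D 2 - D 3 - D 4 + D 5 - 7 * k, D 4 + D 5 + k], ?_⟩
  rw [lap_G2]
  funext v
  fin_cases v <;>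
    simp only [Fin.zero_eta, Fin.mk_one, Fin.reduceFinMk, cons_val_zero, cons_val_one, cons_val] <;>
    omega

theorem nonempty_jac_G2_addEquiv_zmod : Nonempty (Jac G2 ≃+ ZMod 24) :=
  nonempty_jac_addEquiv_zmod (pairingZMod 24 jacG2Weights)
    (pairingZMod_lap dvd_lap_G2_jacG2Weights) mem_principal_G2
    (D₁ := ![-1, 0, 0, 0, 0, 1])
    (by rw [mem_deg0_iff]; decide) (by decide)

/-- The Jacobians of `G₁` and `G₂` are both cyclic of order 24; in particular they
are isomorphic as abelian groups. -/
theorem jac_G1_jac_G2_cyclic24 :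
    Nonempty (Jac G1 ≃+ ZMod 24) ∧ Nonempty (Jac G2 ≃+ ZMod 24) ∧
    Nonempty (Jac G1 ≃+ Jac G2) := by
  obtain ⟨e₁⟩ := nonempty_jac_G1_addEquiv_zmod
  obtain ⟨e₂⟩ := nonempty_jac_G2_addEquiv_zmod
  exact ⟨⟨e₁⟩, ⟨e₂⟩, ⟨e₁.trans e₂.symm⟩⟩

end BNGraph
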